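/- arXiv:math/0009195 — 2 statements merged into one kernel-verified Lean document; each statement's English description precedes it below -/
import Mathlib

section
/- Let A and B be integral operators on L²(0,1) with continuous kernels a and b respectively. Then B majorises A if and only if |a(x,t)| ≤ b(x,t) for all (x,t) ∈ [0,1]×[0,1]. -/
open MeasureTheory

noncomputable def μ01 : Measure ℝ := volume.restrict (Set.Ioo 0 1)

/-!
Testing the majorisation on the indicator of a set `J` gives
`|∫_J a(x,t) dt| ≤ ∫_J b(x,t) dt` for almost every `x`. Both sides are continuous in `x`, so the
inequality holds for every `x ∈ [0,1]`. For fixed `x`, the continuous functions `b(x,·) ∓ a(x,·)`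
then have nonnegative integral over every measurable set, hence are nonnegative on `[0,1]`.
The converse is the triangle inequality for integrals.
-/

open Set

instance isFiniteMeasure_μ01 : IsFiniteMeasure μ01 := ⟨by simp [μ01]⟩

theorem ae_mem_Ioo_μ01 : ∀ᵐ x ∂μ01, x ∈ Ioo (0 : ℝ) 1 := ae_restrict_mem measurableSet_Ioo

theorem integrable_μ01_of_continuousOn {φ : ℝ → ℝ} (hφ : ContinuousOn φ (Icc 0 1)) :
    Integrable φ μ01 :=
  hφ.integrableOn_Icc.mono_set Ioo_subset_Icc_self

theorem le_of_ae_le_of_continuousOn_Icc {a b : ℝ} (hab : a ≠ b) {φ ψ : ℝ → ℝ}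
    (hφ : ContinuousOn φ (Icc a b)) (hψ : ContinuousOn ψ (Icc a b))
    (h : φ ≤ᵐ[volume.restrict (Ioo a b)] ψ) : ∀ x ∈ Icc a b, φ x ≤ ψ x := by
  have hmin : EqOn (fun x => min (φ x) (ψ x)) φ (Icc a b) := by
    refine Measure.eqOn_Icc_of_ae_eq volume hab ?_ (hφ.inf hψ) hφ
    rw [← Measure.restrict_congr_set Ioo_ae_eq_Icc]
    filter_upwards [h] with x hx using min_eq_left hx
  exact fun x hx => min_eq_left_iff.mp (hmin hx)

theorem nonneg_of_forall_setIntegral_nonneg_μ01 {φ : ℝ → ℝ} (hφ : ContinuousOn φ (Icc 0 1))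
    (H : ∀ J, MeasurableSet J → 0 ≤ ∫ t in J, φ t ∂μ01) : ∀ t ∈ Icc (0 : ℝ) 1, 0 ≤ φ t :=
  le_of_ae_le_of_continuousOn_Icc zero_ne_one continuousOn_const hφ
    (ae_nonneg_of_forall_setIntegral_nonneg (integrable_μ01_of_continuousOn hφ)
      fun J hJ _ => H J hJ)

theorem integral_mul_eq_setIntegral_of_ae_eq_indicator {α : Type*} [MeasurableSpace α]
    {μ : Measure α} {k g : α → ℝ} {J : Set α} (hJ : MeasurableSet J)
    (hg : g =ᵐ[μ] J.indicator 1) : ∫ t, k t * g t ∂μ = ∫ t in J, k t ∂μ := by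
  rw [← integral_indicator hJ]
  refine integral_congr_ae ?_
  filter_upwards [hg] with t ht
  by_cases h : t ∈ J <;> simp [ht, h]

section Kernel

variable {a b k : ℝ × ℝ → ℝ} {A B : Lp ℝ 2 μ01 →L[ℝ] Lp ℝ 2 μ01}

theorem continuousOn_setIntegral_kernel (hk : ContinuousOn k (Icc 0 1 ×ˢ Icc 0 1)) (J : Set ℝ) :
    ContinuousOn (fun x => ∫ t in J, k (x, t) ∂μ01) (Icc 0 1) := by
  obtain ⟨C, hC⟩ := (isCompact_Icc.prod isCompact_Icc).exists_bound_of_continuousOn hk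
  refine continuousOn_of_dominated (bound := fun _ => C) (fun x hx => ?_) (fun x hx => ?_)
    (integrable_const C) ?_
  · exact (integrable_μ01_of_continuousOn
      (hk.uncurry_left (f := Function.curry k) x hx)).aestronglyMeasurable.restrict
  · filter_upwards [ae_restrict_of_ae ae_mem_Ioo_μ01] with t ht
    exact hC _ ⟨hx, Ioo_subset_Icc_self ht⟩
  · filter_upwards [ae_restrict_of_ae ae_mem_Ioo_μ01] with t ht
    exact hk.uncurry_right (f := Function.curry k) t (Ioo_subset_Icc_self ht)

theorem ae_abs_setIntegral_le_of_majorises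
    (hA : ∀ f : Lp ℝ 2 μ01, (A f : ℝ → ℝ) =ᵐ[μ01] fun x => ∫ t, a (x, t) * f t ∂μ01)
    (hB : ∀ f : Lp ℝ 2 μ01, (B f : ℝ → ℝ) =ᵐ[μ01] fun x => ∫ t, b (x, t) * f t ∂μ01)
    (hmaj : ∀ f : Lp ℝ 2 μ01, |A f| ≤ B |f|) {J : Set ℝ} (hJ : MeasurableSet J) :
    ∀ᵐ x ∂μ01, |∫ t in J, a (x, t) ∂μ01| ≤ ∫ t in J, b (x, t) ∂μ01 := by
  set f := indicatorConstLp 2 hJ (measure_ne_top μ01 J) (1 : ℝ)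
  have hf : (f : ℝ → ℝ) =ᵐ[μ01] J.indicator 1 := indicatorConstLp_coeFn
  have habsf : ((|f| : Lp ℝ 2 μ01) : ℝ → ℝ) =ᵐ[μ01] J.indicator 1 := by
    filter_upwards [Lp.coeFn_abs f, hf] with t habs ht
    by_cases h : t ∈ J <;> simp [habs, ht, h]
  filter_upwards [(Lp.coeFn_le _ _).mpr (hmaj f), Lp.coeFn_abs (A f), hA f, hB |f|]
    with x hle habs hAx hBx
  rwa [habs, hAx, hBx, integral_mul_eq_setIntegral_of_ae_eq_indicator hJ hf,
    integral_mul_eq_setIntegral_of_ae_eq_indicator hJ habsf] at hle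

theorem abs_kernel_le_of_majorises (ha : ContinuousOn a (Icc 0 1 ×ˢ Icc 0 1))
    (hb : ContinuousOn b (Icc 0 1 ×ˢ Icc 0 1))
    (hA : ∀ f : Lp ℝ 2 μ01, (A f : ℝ → ℝ) =ᵐ[μ01] fun x => ∫ t, a (x, t) * f t ∂μ01)
    (hB : ∀ f : Lp ℝ 2 μ01, (B f : ℝ → ℝ) =ᵐ[μ01] fun x => ∫ t, b (x, t) * f t ∂μ01)
    (hmaj : ∀ f : Lp ℝ 2 μ01, |A f| ≤ B |f|) :
    ∀ x ∈ Icc (0 : ℝ) 1, ∀ t ∈ Icc (0 : ℝ) 1, |a (x, t)| ≤ b (x, t) := by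
  intro x hx
  have hax : ContinuousOn (fun t => a (x, t)) (Icc 0 1) :=
    ha.uncurry_left (f := Function.curry a) x hx
  have hbx : ContinuousOn (fun t => b (x, t)) (Icc 0 1) :=
    hb.uncurry_left (f := Function.curry b) x hx
  have hai := integrable_μ01_of_continuousOn hax
  have hbi := integrable_μ01_of_continuousOn hbx
  have hset (J : Set ℝ) (hJ : MeasurableSet J) :
      |∫ t in J, a (x, t) ∂μ01| ≤ ∫ t in J, b (x, t) ∂μ01 :=
    le_of_ae_le_of_continuousOn_Icc zero_ne_one (continuousOn_setIntegral_kernel ha J).abs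
      (continuousOn_setIntegral_kernel hb J) (ae_abs_setIntegral_le_of_majorises hA hB hmaj hJ)
      x hx
  have hsub := nonneg_of_forall_setIntegral_nonneg_μ01
      (φ := fun t => b (x, t) - a (x, t)) (hbx.sub hax) fun J hJ => by
    rw [integral_sub hbi.restrict hai.restrict]
    linarith [le_abs_self (∫ t in J, a (x, t) ∂μ01), hset J hJ]
  have hadd := nonneg_of_forall_setIntegral_nonneg_μ01
      (φ := fun t => b (x, t) + a (x, t)) (hbx.add hax) fun J hJ => by
    rw [integral_add hbi.restrict hai.restrict]
    linarith [neg_abs_le (∫ t in J, a (x, t) ∂μ01), hset J hJ]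
  intro t ht
  exact abs_le.mpr ⟨by linarith [hadd t ht], by linarith [hsub t ht]⟩

theorem majorises_of_abs_kernel_le (hb : ContinuousOn b (Icc 0 1 ×ˢ Icc 0 1))
    (hA : ∀ f : Lp ℝ 2 μ01, (A f : ℝ → ℝ) =ᵐ[μ01] fun x => ∫ t, a (x, t) * f t ∂μ01)
    (hB : ∀ f : Lp ℝ 2 μ01, (B f : ℝ → ℝ) =ᵐ[μ01] fun x => ∫ t, b (x, t) * f t ∂μ01)
    (hker : ∀ x ∈ Icc (0 : ℝ) 1, ∀ t ∈ Icc (0 : ℝ) 1, |a (x, t)| ≤ b (x, t))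
    (f : Lp ℝ 2 μ01) : |A f| ≤ B |f| := by
  obtain ⟨C, hC⟩ := (isCompact_Icc.prod isCompact_Icc).exists_bound_of_continuousOn hb
  have hfi : Integrable (fun t => |f t|) μ01 := ((Lp.memLp f).integrable one_le_two).abs
  refine (Lp.coeFn_le _ _).mp ?_
  filter_upwards [Lp.coeFn_abs (A f), hA f, hB |f|, ae_mem_Ioo_μ01] with x habs hAx hBx hx
  have hbx : ContinuousOn (fun t => b (x, t)) (Icc 0 1) :=
    hb.uncurry_left (f := Function.curry b) x (Ioo_subset_Icc_self hx)
  have hbfi : Integrable (fun t => b (x, t) * |f t|) μ01 := by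
    refine hfi.bdd_mul (c := C) (integrable_μ01_of_continuousOn hbx).aestronglyMeasurable ?_
    filter_upwards [ae_mem_Ioo_μ01] with t ht
    exact hC _ ⟨Ioo_subset_Icc_self hx, Ioo_subset_Icc_self ht⟩
  calc |A f| x = |∫ t, a (x, t) * f t ∂μ01| := by rw [habs, hAx]
    _ ≤ ∫ t, b (x, t) * |f t| ∂μ01 := by
      rw [← Real.norm_eq_abs]
      refine norm_integral_le_of_norm_le hbfi ?_
      filter_upwards [ae_mem_Ioo_μ01] with t ht
      rw [norm_mul, Real.norm_eq_abs, Real.norm_eq_abs]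
      exact mul_le_mul_of_nonneg_right
        (hker x (Ioo_subset_Icc_self hx) t (Ioo_subset_Icc_self ht)) (abs_nonneg _)
    _ = B |f| x := by
      rw [hBx]
      refine integral_congr_ae ?_
      filter_upwards [Lp.coeFn_abs f] with t ht
      rw [ht]

end Kernel

/-- For integral operators `A`, `B` on `L²(0,1)` with continuous kernels `a`,
`b`, the operator `B` majorises `A` iff `|a(x,t)| ≤ b(x,t)` on `[0,1]²`. -/
theorem majorises_iff_kernel_le
    (a b : ℝ × ℝ → ℝ)
    (ha : ContinuousOn a (Set.Icc 0 1 ×ˢ Set.Icc 0 1))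
    (hb : ContinuousOn b (Set.Icc 0 1 ×ˢ Set.Icc 0 1))
    (A B : Lp ℝ 2 μ01 →L[ℝ] Lp ℝ 2 μ01)
    (hA : ∀ f : Lp ℝ 2 μ01,
      (A f : ℝ → ℝ) =ᵐ[μ01] fun x => ∫ t in Set.Ioo (0:ℝ) 1, a (x, t) * f t)
    (hB : ∀ f : Lp ℝ 2 μ01,
      (B f : ℝ → ℝ) =ᵐ[μ01] fun x => ∫ t in Set.Ioo (0:ℝ) 1, b (x, t) * f t) :
    (∀ f : Lp ℝ 2 μ01, |A f| ≤ B |f|) ↔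
      (∀ x ∈ Set.Icc (0:ℝ) 1, ∀ t ∈ Set.Icc (0:ℝ) 1, |a (x, t)| ≤ b (x, t)) :=
  ⟨abs_kernel_le_of_majorises ha hb hA hB, majorises_of_abs_kernel_le hb hA hB⟩
end

section
/- Let φ, ψ ∈ L²(0,1) and suppose there exist moduli of continuity ω₁, ω₂ (nondecreasing, continuous at 0 with ω_i(0)=0) such that |φ(x)-φ(t)| ≤ ω₁(|x-t|), |ψ(x)-ψ(t)| ≤ ω₂(|x-t|), and φ(x)ψ(x) = 0 for all x. Then for all 0 ≤ t ≤ x ≤ 1, |φ(x)ψ(t) + φ(t)ψ(x)| ≤ ω₁(x-t)·ω₂(x-t). -/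
/-- If `φ` and `ψ` have moduli of continuity `ω₁`, `ω₂` on `[0,1]` and
`φ·ψ ≡ 0`, then `|φ(x)ψ(t) + φ(t)ψ(x)| ≤ ω₁(x-t)·ω₂(x-t)` for
`0 ≤ t ≤ x ≤ 1`. -/
theorem pointwise_modulus_estimate
    (φ ψ ω₁ ω₂ : ℝ → ℝ)
    (hω₁_mono : Monotone ω₁) (hω₂_mono : Monotone ω₂)
    (hω₁_zero : ω₁ 0 = 0) (hω₂_zero : ω₂ 0 = 0)
    (hω₁_cont : ContinuousAt ω₁ 0) (hω₂_cont : ContinuousAt ω₂ 0)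
    (hφ : ∀ x ∈ Set.Icc (0:ℝ) 1, ∀ t ∈ Set.Icc (0:ℝ) 1, |φ x - φ t| ≤ ω₁ |x - t|)
    (hψ : ∀ x ∈ Set.Icc (0:ℝ) 1, ∀ t ∈ Set.Icc (0:ℝ) 1, |ψ x - ψ t| ≤ ω₂ |x - t|)
    (hdisj : ∀ x ∈ Set.Icc (0:ℝ) 1, φ x * ψ x = 0) :
    ∀ x t : ℝ, 0 ≤ t → t ≤ x → x ≤ 1 →
      |φ x * ψ t + φ t * ψ x| ≤ ω₁ (x - t) * ω₂ (x - t) := by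
  intro x t ht htx hx1
  have hxI : x ∈ Set.Icc (0:ℝ) 1 := ⟨le_trans ht htx, hx1⟩
  have htI : t ∈ Set.Icc (0:ℝ) 1 := ⟨ht, le_trans htx hx1⟩
  have hd : (0:ℝ) ≤ x - t := by linarith
  have habs : |x - t| = x - t := abs_of_nonneg hd
  have hω₁nn : 0 ≤ ω₁ (x - t) := hω₁_zero ▸ hω₁_mono hd
  have hω₂nn : 0 ≤ ω₂ (x - t) := hω₂_zero ▸ hω₂_mono hd
  have h1 : |φ x - φ t| ≤ ω₁ (x - t) := by simpa [habs] using hφ x hxI t htI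
  have h2 : |ψ x - ψ t| ≤ ω₂ (x - t) := by simpa [habs] using hψ x hxI t htI
  have hx0 := hdisj x hxI
  have ht0 := hdisj t htI
  rcases mul_eq_zero.1 hx0 with hφx | hψx <;> rcases mul_eq_zero.1 ht0 with hφt | hψt
  · simp [hφx, hφt]; positivity
  · have : |φ x * ψ t + φ t * ψ x| = |φ x - φ t| * |ψ t - ψ x| := by
      rw [hφx, hψt]; rw [← abs_mul]; ring_nf
    rw [this]
    exact mul_le_mul (by simpa [abs_sub_comm] using h1) (by simpa [abs_sub_comm] using h2)
      (abs_nonneg _) hω₁nn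
  · have : |φ x * ψ t + φ t * ψ x| = |φ t - φ x| * |ψ x - ψ t| := by
      rw [hψx, hφt]; rw [← abs_mul]; ring_nf
    rw [this]
    exact mul_le_mul (by simpa [abs_sub_comm] using h1) h2 (abs_nonneg _) hω₁nn
  · simp [hψx, hψt]; positivity
end
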